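/- The change in modularity when a single vertex i moves from its community d to another community c (with c ≠ d, C_i = d) is ΔQ_{i:d→c} = (1/m)(K_{i→c} − K_{i→d\{i}}) − (K_i/(2m²))(K_i + Σ_c − Σ_d), where K_{i→c} is the total weight of edges from i to vertices in community c (excluding self-loops), assuming i has no self-loop. -/
import Mathlib


/-- The change in modularity when vertex `i` moves from its community `d` to another
community `c ≠ d` equals `(1/m)(K_{i→c} − K_{i→d\{i}}) − (K_i/(2m²))(K_i + Σ_c − Σ_d)`,
assuming `i` has no self-loop. -/
theorem delta_modularity_formula
    {V Γ : Type*} [Fintype V] [Fintype Γ] [DecidableEq V] [DecidableEq Γ]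
    (w : V → V → ℝ) (hsym : ∀ a b, w a b = w b a)
    (i : V) (hloop : w i i = 0)
    (C : V → Γ) (d c : Γ) (hCi : C i = d) (hcd : c ≠ d)
    (m : ℝ) (hm : m = (1/2) * ∑ a, ∑ b, w a b) (hm0 : m ≠ 0)
    (K : V → ℝ) (hK : ∀ a, K a = ∑ b, w a b)
    (Sc : Γ → ℝ) (hS : ∀ x, Sc x = ∑ a, if C a = x then K a else 0)
    (Kic Kid : ℝ)
    (hKic : Kic = ∑ j, if C j = c then w i j else 0)
    (hKid : Kid = ∑ j, if j ≠ i ∧ C j = d then w i j else 0)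
    (Q : (V → Γ) → ℝ)
    (hQ : ∀ A : V → Γ, Q A = ∑ x : Γ,
      ((∑ a, ∑ b, if A a = x ∧ A b = x then w a b else 0) / (2*m)
        - ((∑ a, if A a = x then K a else 0) / (2*m))^2)) :
    Q (Function.update C i c) - Q C
      = (1/m) * (Kic - Kid) - (K i / (2*m^2)) * (K i + Sc c - Sc d) := by
  classical
  set C' := Function.update C i c with hC'def
  have hC'i : C' i = c := Function.update_self i c C
  have hC'ne : ∀ a, a ≠ i → C' a = C a := fun a ha => Function.update_of_ne ha c C
  have hdc : d ≠ c := Ne.symm hcd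
  -- generic decompositions splitting off the vertex i
  have dec1 : ∀ (g : V → ℝ), (∑ a, g a) = (∑ a ∈ Finset.univ.erase i, g a) + g i := by
    intro g; rw [Finset.sum_erase_add _ _ (Finset.mem_univ i)]
  have dec2 : ∀ (g : V → V → ℝ), (∑ a, ∑ b, g a b)
      = (∑ a ∈ Finset.univ.erase i, ∑ b ∈ Finset.univ.erase i, g a b)
        + (∑ b ∈ Finset.univ.erase i, g i b)
        + (∑ a ∈ Finset.univ.erase i, g a i) + g i i := by
    intro g
    rw [← Finset.sum_erase_add _ _ (Finset.mem_univ i)]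
    have h : ∀ a : V, (∑ b, g a b) = (∑ b ∈ Finset.univ.erase i, g a b) + g a i := by
      intro a; rw [Finset.sum_erase_add _ _ (Finset.mem_univ i)]
    simp_rw [h]
    rw [Finset.sum_add_distrib]
    ring
  -- the per-community summand
  set f : (V → Γ) → Γ → ℝ := fun A x =>
    ((∑ a, ∑ b, if A a = x ∧ A b = x then w a b else 0) / (2*m)
      - ((∑ a, if A a = x then K a else 0) / (2*m))^2) with hf
  -- reduced quantities (sums not involving i)
  set Rc : ℝ := ∑ a ∈ Finset.univ.erase i, ∑ b ∈ Finset.univ.erase i,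
      (if C a = c ∧ C b = c then w a b else 0) with hRc
  set Rd : ℝ := ∑ a ∈ Finset.univ.erase i, ∑ b ∈ Finset.univ.erase i,
      (if C a = d ∧ C b = d then w a b else 0) with hRd
  -- Kic, Kid as sums over erase i
  have hKic' : (∑ b ∈ Finset.univ.erase i, if C b = c then w i b else 0) = Kic := by
    rw [hKic, ← Finset.sum_erase_add _ _ (Finset.mem_univ i),
      if_neg (by rw [hCi]; exact hdc), add_zero]
  have hKid' : (∑ b ∈ Finset.univ.erase i, if C b = d then w i b else 0) = Kid := by
    rw [hKid, ← Finset.sum_erase_add _ _ (Finset.mem_univ i)]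
    rw [if_neg (by simp), add_zero]
    refine Finset.sum_congr rfl fun b hb => ?_
    have hbi : b ≠ i := Finset.ne_of_mem_erase hb
    simp [hbi]
  -- Sc as sums over erase i
  have hScc : Sc c = ∑ a ∈ Finset.univ.erase i, (if C a = c then K a else 0) := by
    rw [hS, dec1, if_neg (by rw [hCi]; exact hdc), add_zero]
  have hScd : Sc d = (∑ a ∈ Finset.univ.erase i, (if C a = d then K a else 0)) + K i := by
    rw [hS, dec1, if_pos hCi]
  -- S values for C'
  have hSC'c : (∑ a, if C' a = c then K a else 0) = Sc c + K i := by
    rw [dec1, if_pos hC'i, hScc]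
    congr 1
    exact Finset.sum_congr rfl fun a ha => by rw [hC'ne a (Finset.ne_of_mem_erase ha)]
  have hSC'd : (∑ a, if C' a = d then K a else 0) = Sc d - K i := by
    rw [dec1, if_neg (by rw [hC'i]; exact hcd), add_zero, hScd, add_sub_cancel_right]
    exact Finset.sum_congr rfl fun a ha => by rw [hC'ne a (Finset.ne_of_mem_erase ha)]
  have hSC : ∀ x, (∑ a, if C a = x then K a else 0) = Sc x := fun x => (hS x).symm
  -- E values
  have hEcC' : (∑ a, ∑ b, if C' a = c ∧ C' b = c then w a b else 0) = Rc + 2 * Kic := by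
    rw [dec2, hRc]
    have h1 : (∑ a ∈ Finset.univ.erase i, ∑ b ∈ Finset.univ.erase i,
        (if C' a = c ∧ C' b = c then w a b else 0))
        = ∑ a ∈ Finset.univ.erase i, ∑ b ∈ Finset.univ.erase i,
        (if C a = c ∧ C b = c then w a b else 0) := by
      refine Finset.sum_congr rfl fun a ha => Finset.sum_congr rfl fun b hb => ?_
      rw [hC'ne a (Finset.ne_of_mem_erase ha), hC'ne b (Finset.ne_of_mem_erase hb)]
    have h2 : (∑ b ∈ Finset.univ.erase i, (if C' i = c ∧ C' b = c then w i b else 0)) = Kic := by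
      rw [← hKic']
      refine Finset.sum_congr rfl fun b hb => ?_
      rw [hC'i, hC'ne b (Finset.ne_of_mem_erase hb)]
      simp
    have h3 : (∑ a ∈ Finset.univ.erase i, (if C' a = c ∧ C' i = c then w a i else 0)) = Kic := by
      rw [← hKic']
      refine Finset.sum_congr rfl fun a ha => ?_
      rw [hC'i, hC'ne a (Finset.ne_of_mem_erase ha), hsym a i]
      simp
    rw [h1, h2, h3]
    simp [hloop]
    ring
  have hEcC : (∑ a, ∑ b, if C a = c ∧ C b = c then w a b else 0) = Rc := by
    rw [dec2, hRc]
    simp [hCi, hdc, hloop]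
  have hEdC' : (∑ a, ∑ b, if C' a = d ∧ C' b = d then w a b else 0) = Rd := by
    rw [dec2, hRd]
    have h1 : (∑ a ∈ Finset.univ.erase i, ∑ b ∈ Finset.univ.erase i,
        (if C' a = d ∧ C' b = d then w a b else 0))
        = ∑ a ∈ Finset.univ.erase i, ∑ b ∈ Finset.univ.erase i,
        (if C a = d ∧ C b = d then w a b else 0) := by
      refine Finset.sum_congr rfl fun a ha => Finset.sum_congr rfl fun b hb => ?_
      rw [hC'ne a (Finset.ne_of_mem_erase ha), hC'ne b (Finset.ne_of_mem_erase hb)]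
    rw [h1]
    simp [hC'i, hcd, hloop]
  have hEdC : (∑ a, ∑ b, if C a = d ∧ C b = d then w a b else 0) = Rd + 2 * Kid := by
    rw [dec2, hRd]
    have h2 : (∑ b ∈ Finset.univ.erase i, (if C i = d ∧ C b = d then w i b else 0)) = Kid := by
      rw [← hKid']
      refine Finset.sum_congr rfl fun b hb => ?_
      rw [hCi]; simp
    have h3 : (∑ a ∈ Finset.univ.erase i, (if C a = d ∧ C i = d then w a i else 0)) = Kid := by
      rw [← hKid']
      refine Finset.sum_congr rfl fun a ha => ?_
      rw [hCi, hsym a i]; simp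
    rw [h2, h3]
    simp [hCi, hloop]
    ring
  -- the difference localizes to communities c and d
  have key : Q C' - Q C = (f C' c - f C c) + (f C' d - f C d) := by
    rw [hQ C', hQ C, ← Finset.sum_sub_distrib]
    rw [← Finset.sum_subset (Finset.subset_univ ({c, d} : Finset Γ))
      (fun x _ hx => ?_)]
    · rw [Finset.sum_pair hcd]
    · simp only [Finset.mem_insert, Finset.mem_singleton, not_or] at hx
      obtain ⟨hxc, hxd⟩ := hx
      have hcond : ∀ a, (C' a = x) = (C a = x) := by
        intro a
        by_cases ha : a = i
        · subst ha
          rw [hC'i, hCi]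
          simp only [eq_iff_iff]
          exact ⟨fun h => absurd h.symm hxc, fun h => absurd h.symm hxd⟩
        · rw [hC'ne a ha]
      simp only [hf, hcond, sub_self]
  rw [key]
  simp only [hf]
  rw [hEcC', hEcC, hEdC', hEdC, hSC'c, hSC'd, hSC c, hSC d]
  field_simp
  ring
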